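/- arXiv:0903.1174 — 2 statements merged into one kernel-verified Lean document; each statement's English description precedes it below -/
import Mathlib

section
/- Let 0 ≤ α < β with β - α > 1, let λ ∈ ℝ, and define Q(u) = q_{α,β}(u)·q_{α,β}(λ - u), where q_{α,β} is as below. Then Q is increasing on (λ/2, ∞) and decreasing on (-∞, λ/2). -/
noncomputable def q (α β u : ℝ) : ℝ :=
  if u = 0 then β - α else (Real.exp (-α * u) - Real.exp (-β * u)) / (1 - Real.exp (-u))

/-!
Writing `g = β - α`, one has `q α β u = exp (-(α + β - 1) u / 2) · sinh (g u / 2) / sinh (u / 2)`.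
The exponential factor is log-linear, and `x ↦ log (sinh (g x) / sinh x)` is even with
derivative `g coth (g x) - coth x`, which is strictly increasing when `g > 1` (this comes down to
`sinh y / y` being increasing on `(0, ∞)`, i.e. to the convexity of `sinh`). Hence `log q` is
strictly convex on `ℝ`, so `u ↦ log q u + log q (λ - u)` is strictly convex and symmetric about
`λ / 2`; such a function increases to the right of its axis of symmetry and decreases to the left.
-/

open Real Set

theorem Function.Even.deriv_odd {𝕜 F : Type*} [NontriviallyNormedField 𝕜] [NormedAddCommGroup F]
    [NormedSpace 𝕜 F] {f : 𝕜 → F} (hf : f.Even) : (deriv f).Odd := by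
  intro x
  have h := deriv_comp_neg f (-x)
  rwa [show (fun y => f (-y)) = f from funext hf, neg_neg] at h

theorem Function.Odd.strictMono_of_strictMonoOn_Ici {α β : Type*} [AddCommGroup α] [LinearOrder α]
    [IsOrderedAddMonoid α] [AddCommGroup β] [PartialOrder β] [IsOrderedAddMonoid β] {f : α → β}
    (hf : f.Odd) (h : StrictMonoOn f (Ici 0)) : StrictMono f := by
  refine StrictMonoOn.Iic_union_Ici (fun x hx y hy hxy => ?_) h
  have := h (neg_nonneg.2 hy) (neg_nonneg.2 hx) (neg_lt_neg hxy)
  rwa [hf, hf, neg_lt_neg_iff] at this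

theorem StrictConvexOn.comp_const_mul {f : ℝ → ℝ} (hf : StrictConvexOn ℝ univ f) {k : ℝ}
    (hk : k ≠ 0) : StrictConvexOn ℝ univ (fun x => f (k * x)) := by
  refine ⟨convex_univ, fun x _ y _ hxy a b ha hb hab => ?_⟩
  have := hf.2 trivial trivial (fun h => hxy (mul_left_cancel₀ hk h)) ha hb hab
  simpa only [smul_eq_mul, mul_add, mul_left_comm k] using this

theorem StrictConvexOn.strictMonoOn_add_comp_sub {f : ℝ → ℝ} (hf : StrictConvexOn ℝ univ f)
    (a : ℝ) : StrictMonoOn (fun x => f x + f (a - x)) (Ici (a / 2)) := by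
  intro x (hx : a / 2 ≤ x) y _ hxy
  have hd : 0 < 2 * y - a := by linarith
  -- `x` and `a - x` are the same convex combinations of `y` and `a - y`, with the roles swapped
  set t := (x - (a - y)) / (2 * y - a)
  have ht : 0 < t := div_pos (by linarith) hd
  have ht' : 0 < 1 - t := by
    rw [sub_pos, div_lt_one hd]; linarith
  have htd : t * (2 * y - a) = x - (a - y) := div_mul_cancel₀ _ hd.ne'
  have hne : y ≠ a - y := by linarith
  have h₁ := hf.2 trivial trivial hne ht ht' (by ring)
  have h₂ := hf.2 trivial trivial hne.symm ht ht' (by ring)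
  simp only [smul_eq_mul] at h₁ h₂
  rw [show t * y + (1 - t) * (a - y) = x by linear_combination htd] at h₁
  rw [show t * (a - y) + (1 - t) * y = a - x by linear_combination -htd] at h₂
  show f x + f (a - x) < f y + f (a - y)
  linarith

theorem StrictConvexOn.strictAntiOn_add_comp_sub {f : ℝ → ℝ} (hf : StrictConvexOn ℝ univ f)
    (a : ℝ) : StrictAntiOn (fun x => f x + f (a - x)) (Iic (a / 2)) := by
  intro x (hx : x ≤ a / 2) y (hy : y ≤ a / 2) hxy
  have := hf.strictMonoOn_add_comp_sub a (show a / 2 ≤ a - y by linarith)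
    (show a / 2 ≤ a - x by linarith) (by linarith)
  simp only [sub_sub_cancel] at this
  linarith

theorem strictMonoOn_sinh_div_self : StrictMonoOn (fun x => sinh x / x) (Ioi 0) := by
  have hconv : StrictConvexOn ℝ (Ici 0) sinh :=
    StrictMonoOn.strictConvexOn_of_deriv (convex_Ici 0) continuous_sinh.continuousOn
      (by rw [Real.deriv_sinh, interior_Ici]; exact cosh_strictMonoOn.mono Ioi_subset_Ici_self)
  intro x (hx : 0 < x) y (hy : 0 < y) hxy
  simpa using hconv.secant_strict_mono self_mem_Ici hx.le hy.le hx.ne' hy.ne' hxy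

theorem mul_sinh_lt_mul_sinh {s t x : ℝ} (hs : 0 < s) (hst : s < t) (hx : 0 < x) :
    t * sinh (s * x) < s * sinh (t * x) := by
  have h := strictMonoOn_sinh_div_self (mul_pos hs hx) (mul_pos (hs.trans hst) hx)
    (mul_lt_mul_of_pos_right hst hx)
  rw [div_lt_div_iff₀ (mul_pos hs hx) (mul_pos (hs.trans hst) hx)] at h
  nlinarith

noncomputable def sinhRatio (g x : ℝ) : ℝ :=
  if x = 0 then g else sinh (g * x) / sinh x

theorem sinhRatio_pos {g : ℝ} (hg : 0 < g) (x : ℝ) : 0 < sinhRatio g x := by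
  unfold sinhRatio
  split_ifs with hx
  · exact hg
  rcases lt_or_gt_of_ne hx with hx | hx
  · exact div_pos_of_neg_of_neg (sinh_neg_iff.2 (mul_neg_of_pos_of_neg hg hx)) (sinh_neg_iff.2 hx)
  · exact div_pos (sinh_pos_iff.2 (mul_pos hg hx)) (sinh_pos_iff.2 hx)

theorem sinhRatio_even (g : ℝ) : (sinhRatio g).Even := by
  intro x
  simp [sinhRatio, neg_div_neg_eq]

theorem continuous_sinhRatio (g : ℝ) : Continuous (sinhRatio g) := by
  rw [continuous_iff_continuousAt]
  intro x
  rcases eq_or_ne x 0 with rfl | hx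
  · -- at `0`, the ratio of the difference quotients of `sinh (g ·)` and `sinh` tends to `g / 1`
    have hnum := hasDerivAt_iff_tendsto_slope.1 (((hasDerivAt_id (0 : ℝ)).const_mul g).sinh)
    have hden := hasDerivAt_iff_tendsto_slope.1 (hasDerivAt_sinh (0 : ℝ))
    rw [← continuousWithinAt_compl_self, ContinuousWithinAt]
    convert (hnum.div hden (by simp)).congr' ?_ using 2
    · simp [sinhRatio]
    · filter_upwards [self_mem_nhdsWithin] with t (ht : t ≠ 0)
      simp [slope_def_field, sinhRatio, ht, div_div_div_cancel_right₀ ht]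
  · refine ((continuous_sinh.comp (continuous_const_mul g)).continuousAt.div
      continuous_sinh.continuousAt (sinh_ne_zero.2 hx)).congr ?_
    filter_upwards [isOpen_compl_singleton.mem_nhds hx] with y (hy : y ≠ 0)
    simp [sinhRatio, hy]

noncomputable def logDerivSinhRatio (g x : ℝ) : ℝ :=
  g * cosh (g * x) / sinh (g * x) - cosh x / sinh x

theorem hasDerivAt_log_sinhRatio {g x : ℝ} (hg : g ≠ 0) (hx : x ≠ 0) :
    HasDerivAt (fun y => log (sinhRatio g y)) (logDerivSinhRatio g x) x := by
  have hs : sinh x ≠ 0 := sinh_ne_zero.2 hx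
  have hsg : sinh (g * x) ≠ 0 := sinh_ne_zero.2 (mul_ne_zero hg hx)
  have hratio := (((hasDerivAt_id x).const_mul g).sinh.div (hasDerivAt_sinh x) hs).log
    (div_ne_zero hsg hs)
  refine (hratio.congr_of_eventuallyEq ?_).congr_deriv ?_
  · filter_upwards [isOpen_compl_singleton.mem_nhds hx] with y (hy : y ≠ 0)
    simp [sinhRatio, hy]
  · simp only [logDerivSinhRatio, id, Pi.div_apply]
    field_simp

theorem logDerivSinhRatio_odd (g : ℝ) : (logDerivSinhRatio g).Odd := by
  intro x
  simp only [logDerivSinhRatio, mul_neg, sinh_neg, cosh_neg, div_neg]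
  ring

theorem hasDerivAt_logDerivSinhRatio {g x : ℝ} (hg : g ≠ 0) (hx : x ≠ 0) :
    HasDerivAt (logDerivSinhRatio g) (1 / sinh x ^ 2 - g ^ 2 / sinh (g * x) ^ 2) x := by
  have hs : sinh x ≠ 0 := sinh_ne_zero.2 hx
  have hsg : sinh (g * x) ≠ 0 := sinh_ne_zero.2 (mul_ne_zero hg hx)
  have hgx := (hasDerivAt_id x).const_mul g
  refine ((hgx.cosh.const_mul g).div hgx.sinh hsg |>.sub
    ((hasDerivAt_cosh x).div (hasDerivAt_sinh x) hs)).congr_deriv ?_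
  simp only [id]
  field_simp
  linear_combination sinh (g * x) ^ 2 * cosh_sq_sub_sinh_sq x
    - g ^ 2 * sinh x ^ 2 * cosh_sq_sub_sinh_sq (g * x)

theorem logDerivSinhRatio_pos {g x : ℝ} (hg : 1 < g) (hx : 0 < x) :
    0 < logDerivSinhRatio g x := by
  have hsx : 0 < sinh x := sinh_pos_iff.2 hx
  have hsgx : 0 < sinh (g * x) := sinh_pos_iff.2 (mul_pos (by linarith) hx)
  have key := mul_sinh_lt_mul_sinh (s := g - 1) (t := g + 1) (by linarith) (by linarith) hx
  rw [show (g + 1) * x = g * x + x by ring, show (g - 1) * x = g * x - x by ring,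
    sinh_add, sinh_sub] at key
  rw [logDerivSinhRatio, sub_pos, div_lt_div_iff₀ hsx hsgx]
  linarith

theorem strictMonoOn_logDerivSinhRatio {g : ℝ} (hg : 1 < g) :
    StrictMonoOn (logDerivSinhRatio g) (Ioi 0) := by
  have hg₀ : 0 < g := by linarith
  refine strictMonoOn_of_deriv_pos (convex_Ioi 0) (fun x (hx : 0 < x) =>
    (hasDerivAt_logDerivSinhRatio hg₀.ne' hx.ne').continuousAt.continuousWithinAt) ?_
  rw [interior_Ioi]
  intro x (hx : 0 < x)
  have hsx : 0 < sinh x := sinh_pos_iff.2 hx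
  have hsgx : 0 < sinh (g * x) := sinh_pos_iff.2 (mul_pos hg₀ hx)
  have key : g * sinh x < sinh (g * x) := by simpa using mul_sinh_lt_mul_sinh one_pos hg hx
  have key2 := pow_lt_pow_left₀ key (by positivity) two_ne_zero
  rw [mul_pow] at key2
  rw [(hasDerivAt_logDerivSinhRatio hg₀.ne' hx.ne').deriv, sub_pos,
    div_lt_div_iff₀ (pow_pos hsgx 2) (pow_pos hsx 2), one_mul]
  linarith

theorem strictMono_logDerivSinhRatio {g : ℝ} (hg : 1 < g) : StrictMono (logDerivSinhRatio g) := by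
  refine (logDerivSinhRatio_odd g).strictMono_of_strictMonoOn_Ici fun x (hx : 0 ≤ x) y hy hxy => ?_
  rcases hx.eq_or_lt with rfl | hx
  · rw [(logDerivSinhRatio_odd g).map_zero]
    exact logDerivSinhRatio_pos hg hxy
  · exact strictMonoOn_logDerivSinhRatio hg hx (hx.trans hxy) hxy

theorem deriv_log_sinhRatio {g : ℝ} (hg : g ≠ 0) :
    deriv (fun x => log (sinhRatio g x)) = logDerivSinhRatio g := by
  funext x
  rcases eq_or_ne x 0 with rfl | hx
  · -- both sides are odd; on the right this is Lean's `g / 0 - 1 / 0 = 0`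
    exact ((sinhRatio_even g).left_comp log).deriv_odd.map_zero.trans
      (logDerivSinhRatio_odd g).map_zero.symm
  · exact (hasDerivAt_log_sinhRatio hg hx).deriv

theorem strictConvexOn_log_sinhRatio {g : ℝ} (hg : 1 < g) :
    StrictConvexOn ℝ univ (fun x => log (sinhRatio g x)) := by
  have hg₀ : 0 < g := by linarith
  refine StrictMonoOn.strictConvexOn_of_deriv convex_univ
    ((continuous_sinhRatio g).log fun x => (sinhRatio_pos hg₀ x).ne').continuousOn ?_
  rw [deriv_log_sinhRatio hg₀.ne']
  exact (strictMono_logDerivSinhRatio hg).strictMonoOn _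

theorem q_eq_exp_mul_sinhRatio (α β u : ℝ) :
    q α β u = exp (-((α + β - 1) / 2) * u) * sinhRatio (β - α) (u / 2) := by
  rcases eq_or_ne u 0 with rfl | hu
  · simp [q, sinhRatio]
  have hu2 : u / 2 ≠ 0 := div_ne_zero hu two_ne_zero
  have hnum : exp (-((α + β - 1) / 2) * u) * (exp ((β - α) * (u / 2)) - exp (-((β - α) * (u / 2))))
      = (exp (-α * u) - exp (-β * u)) * exp (u / 2) := by
    simp only [mul_sub, sub_mul, ← exp_add]; ring_nf
  have hden : exp (u / 2) - exp (-(u / 2)) = (1 - exp (-u)) * exp (u / 2) := by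
    simp only [sub_mul, one_mul, ← exp_add]; ring_nf
  rw [q, if_neg hu, sinhRatio, if_neg hu2, sinh_eq, sinh_eq, mul_div_assoc', mul_div_assoc',
    div_div_div_cancel_right₀ two_ne_zero, hnum, hden, mul_div_mul_right _ _ (exp_pos _).ne']

theorem q_pos {α β : ℝ} (h : α < β) (u : ℝ) : 0 < q α β u := by
  rw [q_eq_exp_mul_sinhRatio]
  exact mul_pos (exp_pos _) (sinhRatio_pos (sub_pos.2 h) _)

theorem strictConvexOn_log_q {α β : ℝ} (h : 1 < β - α) :
    StrictConvexOn ℝ univ (fun u => log (q α β u)) := by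
  have hlog : (fun u => log (q α β u))
      = fun u => log (sinhRatio (β - α) (2⁻¹ * u)) + -((α + β - 1) / 2) * u := by
    funext u
    rw [q_eq_exp_mul_sinhRatio, log_mul (exp_pos _).ne' (sinhRatio_pos (by linarith) _).ne',
      log_exp, div_eq_inv_mul u, add_comm]
  rw [hlog]
  exact ((strictConvexOn_log_sinhRatio h).comp_const_mul (inv_ne_zero two_ne_zero)).add_convexOn
    ((LinearMap.mul ℝ ℝ _).convexOn convex_univ)

theorem Q_monotonicity_gt_one_general (α β lam : ℝ) (h1 : 1 < β - α) :
    StrictMonoOn (fun u => q α β u * q α β (lam - u)) (Set.Ioi (lam / 2)) ∧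
    StrictAntiOn (fun u => q α β u * q α β (lam - u)) (Set.Iio (lam / 2)) := by
  have hq : ∀ u, 0 < q α β u := q_pos (by linarith)
  have hlogq := strictConvexOn_log_q h1
  have hQ : (fun u => q α β u * q α β (lam - u))
      = exp ∘ fun u => log (q α β u) + log (q α β (lam - u)) := by
    funext u
    rw [Function.comp_apply, exp_add, exp_log (hq _), exp_log (hq _)]
  rw [hQ]
  exact ⟨exp_strictMono.comp_strictMonoOn
      ((hlogq.strictMonoOn_add_comp_sub lam).mono Ioi_subset_Ici_self),
    exp_strictMono.comp_strictAntiOn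
      ((hlogq.strictAntiOn_add_comp_sub lam).mono Iio_subset_Iic_self)⟩

theorem Q_monotonicity_gt_one (α β lam : ℝ) (hα : 0 ≤ α) (hαβ : α < β) (h1 : 1 < β - α) :
    StrictMonoOn (fun u => q α β u * q α β (lam - u)) (Set.Ioi (lam / 2)) ∧
    StrictAntiOn (fun u => q α β u * q α β (lam - u)) (Set.Iio (lam / 2)) :=
  Q_monotonicity_gt_one_general α β lam h1
end

section
/- Let s, t ≥ 0 with 0 < |t - s| < 1. Then the function z(x) = [Γ(x+t)/Γ(x+s)]^{1/(t-s)} − x is convex on (0, ∞). -/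
/-!
For `s < t` put `d = t - s ∈ (0, 1]` (the case `t < s` follows from the symmetry `z s t = z t s`),
`a = x + s`, `b = x + t`, and write `z = E - id` with `E = exp ((log Γ(x + t) - log Γ(x + s)) / d)`.
Differentiating the Gauss product termwise gives `E' = E ψ₁ / d` and `E'' = E (ψ₁² - d ψ₂) / d²`,
where `ψ₁ = ∑ (1/(a+k) - 1/(b+k))` and `ψ₂ = ∑ (1/(a+k)² - 1/(b+k)²)`. These are the Laplace
transforms `ψ₁ = ∫ K`, `ψ₂ = ∫ τ K(τ) dτ` of the kernel `K(τ) = (e^{-aτ} - e^{-bτ}) / (1 - e^{-τ})`.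
Because `τ ↦ log ((1 - e^{-dτ}) / (1 - e^{-τ}))` is concave (equivalently `sinh (d y) ≤ d sinh y`)
and tends to `log d` at `0`, the kernel satisfies `d K(σ + ρ) ≤ K(σ) K(ρ)`; integrating over the
quadrant, `d ∫ τ K = d ∫∫ K(σ + ρ) ≤ (∫ K)²`, that is `d ψ₂ ≤ ψ₁²`.
-/

noncomputable def z (s t x : ℝ) : ℝ :=
  (Real.Gamma (x + t) / Real.Gamma (x + s)) ^ ((1 : ℝ) / (t - s)) - x

open Real Set Filter Topology MeasureTheory
open scoped Nat

theorem Real.convexOn_sinh : ConvexOn ℝ (Ici 0) sinh :=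
  MonotoneOn.convexOn_of_deriv (convex_Ici 0) continuous_sinh.continuousOn
    differentiable_sinh.differentiableOn <| by
      rw [interior_Ici, deriv_sinh]
      exact fun x hx y _ hxy => cosh_le_cosh.2 (by
        rw [abs_of_pos hx, abs_of_pos (hx.trans_le hxy)]; exact hxy)

theorem Real.sinh_mul_le_mul_sinh {d y : ℝ} (hd₀ : 0 ≤ d) (hd₁ : d ≤ 1) (hy : 0 ≤ y) :
    sinh (d * y) ≤ d * sinh y := by
  simpa using convexOn_sinh.2 (mem_Ici.2 hy) (mem_Ici.2 le_rfl) hd₀ (sub_nonneg.2 hd₁) (by ring)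

theorem Real.sq_exp_sub_one (u : ℝ) : (exp u - 1) ^ 2 = exp u * (2 * sinh (u / 2)) ^ 2 := by
  have h₁ : exp u = exp (u / 2) ^ 2 := by rw [← exp_nat_mul]; ring_nf
  have h₂ : exp (u / 2) * exp (-(u / 2)) = 1 := by rw [← exp_add]; simp
  rw [sinh_eq, h₁]
  linear_combination (2 * exp (u / 2) ^ 2 - exp (u / 2) * exp (-(u / 2)) - 1) * h₂

theorem hasDerivAt_one_sub_exp_neg_mul (c τ : ℝ) :
    HasDerivAt (fun τ => 1 - exp (-(c * τ))) (c * exp (-(c * τ))) τ := by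
  simpa [mul_comm] using (((hasDerivAt_id τ).const_mul c).neg.exp).const_sub 1

theorem hasDerivAt_log_one_sub_exp_neg_mul {c τ : ℝ} (h : 0 < c * τ) :
    HasDerivAt (fun τ => log (1 - exp (-(c * τ)))) (c / (exp (c * τ) - 1)) τ := by
  have hlt : exp (-(c * τ)) < 1 := exp_lt_one_iff.2 (by linarith)
  refine ((hasDerivAt_one_sub_exp_neg_mul c τ).log (by linarith)).congr_deriv ?_
  have : exp (c * τ) - 1 ≠ 0 := by linarith [one_lt_exp_iff.2 h]
  rw [exp_neg]
  field_simp

theorem hasDerivAt_div_exp_mul_sub_one {c τ : ℝ} (h : c * τ ≠ 0) :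
    HasDerivAt (fun τ => c / (exp (c * τ) - 1)) (-(c / (2 * sinh (c * τ / 2))) ^ 2) τ := by
  have hne : exp (c * τ) - 1 ≠ 0 := sub_ne_zero.2 (by simpa using h)
  have hsinh : sinh (c * τ / 2) ≠ 0 := by simpa using h
  have hinner : HasDerivAt (fun τ => exp (c * τ) - 1) (c * exp (c * τ)) τ := by
    simpa [mul_comm] using (((hasDerivAt_id τ).const_mul c).exp).sub_const 1
  refine ((hasDerivAt_const τ c).div hinner hne).congr_deriv ?_
  rw [sq_exp_sub_one]
  field_simp
  ring

noncomputable def expRatio (d τ : ℝ) : ℝ := (1 - exp (-(d * τ))) / (1 - exp (-τ))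

theorem expRatio_pos {d τ : ℝ} (hd : 0 < d) (hτ : 0 < τ) : 0 < expRatio d τ :=
  div_pos (sub_pos.2 (exp_lt_one_iff.2 (by nlinarith))) (sub_pos.2 (exp_lt_one_iff.2 (by linarith)))

theorem one_div_two_sinh_half_le {d τ : ℝ} (hd₀ : 0 < d) (hd₁ : d ≤ 1) (hτ : 0 < τ) :
    1 / (2 * sinh (τ / 2)) ≤ d / (2 * sinh (d * τ / 2)) := by
  have hsinh : sinh (d * τ / 2) ≤ d * sinh (τ / 2) := by
    simpa [mul_div_assoc] using sinh_mul_le_mul_sinh hd₀.le hd₁ (by positivity : 0 ≤ τ / 2)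
  have : 0 < sinh (d * τ / 2) := sinh_pos_iff.2 (by positivity)
  rw [div_le_div_iff₀ (by positivity) (by positivity)]
  linarith

theorem concaveOn_log_expRatio {d : ℝ} (hd₀ : 0 < d) (hd₁ : d ≤ 1) :
    ConcaveOn ℝ (Ioi 0) (fun τ => log (expRatio d τ)) := by
  have h' : ∀ τ ∈ Ioi (0 : ℝ), HasDerivAt
      (fun τ => log (1 - exp (-(d * τ))) - log (1 - exp (-(1 * τ))))
      (d / (exp (d * τ) - 1) - 1 / (exp (1 * τ) - 1)) τ := fun τ (hτ : 0 < τ) =>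
    (hasDerivAt_log_one_sub_exp_neg_mul (by positivity)).sub
      (hasDerivAt_log_one_sub_exp_neg_mul (by positivity))
  have h'' : ∀ τ ∈ Ioi (0 : ℝ), HasDerivAt (fun τ => d / (exp (d * τ) - 1) - 1 / (exp (1 * τ) - 1))
      (-(d / (2 * sinh (d * τ / 2))) ^ 2 - -(1 / (2 * sinh (1 * τ / 2))) ^ 2) τ :=
    fun τ (hτ : 0 < τ) => (hasDerivAt_div_exp_mul_sub_one (by positivity)).sub
      (hasDerivAt_div_exp_mul_sub_one (by positivity))
  have hf := concaveOn_of_hasDerivWithinAt2_nonpos (convex_Ioi 0)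
    (fun τ hτ => (h' τ hτ).continuousAt.continuousWithinAt)
    (fun τ hτ => (h' τ (by simpa using hτ)).hasDerivWithinAt)
    (fun τ hτ => (h'' τ (by simpa using hτ)).hasDerivWithinAt) <| by
      rw [interior_Ioi]
      intro τ (hτ : 0 < τ)
      rw [one_mul]
      have := pow_le_pow_left₀ (one_div_pos.2 (by positivity)).le
        (one_div_two_sinh_half_le hd₀ hd₁ hτ) 2
      linarith
  refine hf.congr fun τ (hτ : 0 < τ) => ?_
  have h₁ : 0 < 1 - exp (-(d * τ)) := sub_pos.2 (exp_lt_one_iff.2 (by nlinarith))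
  have h₂ : 0 < 1 - exp (-τ) := sub_pos.2 (exp_lt_one_iff.2 (by linarith))
  simp only [expRatio, one_mul, log_div h₁.ne' h₂.ne']

theorem tendsto_expRatio (d : ℝ) : Tendsto (expRatio d) (𝓝[>] 0) (𝓝 d) := by
  have slope (c : ℝ) :
      Tendsto (fun τ => τ⁻¹ * (1 - exp (-(c * τ)))) (𝓝[>] 0) (𝓝 c) := by
    have := hasDerivAt_iff_tendsto_slope_zero.1 (hasDerivAt_one_sub_exp_neg_mul c 0)
    simpa using this.mono_left (nhdsGT_le_nhdsNE 0)
  have := (slope d).div (by simpa using slope 1) one_ne_zero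
  rw [div_one] at this
  refine this.congr' ?_
  filter_upwards [self_mem_nhdsWithin] with τ (hτ : 0 < τ)
  rw [Pi.div_apply, mul_div_mul_left _ _ (inv_ne_zero hτ.ne'), expRatio]

theorem ConcaveOn.antitoneOn_slope_of_tendsto {f : ℝ → ℝ} {L : ℝ}
    (hf : ConcaveOn ℝ (Ioi 0) f) (hL : Tendsto f (𝓝[>] 0) (𝓝 L)) :
    AntitoneOn (fun τ => (f τ - L) / τ) (Ioi 0) := by
  intro σ (hσ : 0 < σ) τ (hτ : 0 < τ) hστ
  have hslope (x : ℝ) (hx : 0 < x) :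
      Tendsto (fun ε => (f x - f ε) / (x - ε)) (𝓝[>] 0) (𝓝 ((f x - L) / x)) := by
    have hid : Tendsto (fun ε : ℝ => ε) (𝓝[>] 0) (𝓝 0) := nhdsWithin_le_nhds
    have := ((tendsto_const_nhds (x := f x)).sub hL).div
      ((tendsto_const_nhds (x := x)).sub hid) (by simpa using hx.ne')
    rwa [sub_zero] at this
  refine le_of_tendsto_of_tendsto (hslope τ hτ) (hslope σ hσ) ?_
  filter_upwards [Ioo_mem_nhdsGT hσ] with ε ⟨hε, hεσ⟩
  have := hf.neg.secant_mono (a := ε) hε hσ hτ hεσ.ne' (hεσ.trans_le hστ).ne' hστ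
  simp only [Pi.neg_apply, neg_sub_neg] at this
  rwa [← neg_sub (f ε), ← neg_sub (f ε), neg_div, neg_div, neg_le_neg_iff]

theorem ConcaveOn.le_add_of_tendsto {f : ℝ → ℝ} {L : ℝ}
    (hf : ConcaveOn ℝ (Ioi 0) f) (hL : Tendsto f (𝓝[>] 0) (𝓝 L)) {σ ρ : ℝ}
    (hσ : 0 < σ) (hρ : 0 < ρ) : L + f (σ + ρ) ≤ f σ + f ρ := by
  have hanti := hf.antitoneOn_slope_of_tendsto hL
  have h₁ := hanti hσ (add_pos hσ hρ : 0 < σ + ρ) (by linarith)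
  have h₂ := hanti hρ (add_pos hσ hρ : 0 < σ + ρ) (by linarith)
  simp only [div_le_div_iff₀ (add_pos hσ hρ) hσ, div_le_div_iff₀ (add_pos hσ hρ) hρ] at h₁ h₂
  nlinarith

theorem mul_expRatio_add_le {d σ ρ : ℝ} (hd₀ : 0 < d) (hd₁ : d ≤ 1) (hσ : 0 < σ) (hρ : 0 < ρ) :
    d * expRatio d (σ + ρ) ≤ expRatio d σ * expRatio d ρ := by
  have hL := ((continuousAt_log hd₀.ne').tendsto).comp (tendsto_expRatio d)
  have := (concaveOn_log_expRatio hd₀ hd₁).le_add_of_tendsto hL hσ hρ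
  have hpos := expRatio_pos hd₀ (add_pos hσ hρ)
  rw [← log_mul hd₀.ne' hpos.ne', ← log_mul (expRatio_pos hd₀ hσ).ne'
    (expRatio_pos hd₀ hρ).ne'] at this
  exact (log_le_log_iff (by positivity)
    (mul_pos (expRatio_pos hd₀ hσ) (expRatio_pos hd₀ hρ))).1 this

theorem setLIntegral_Ioi_add_eq (f : ℝ → ENNReal) (σ : ℝ) :
    ∫⁻ ρ in Ioi 0, f (σ + ρ) = ∫⁻ τ in Ioi σ, f τ := by
  rw [← lintegral_indicator measurableSet_Ioi, ← lintegral_indicator measurableSet_Ioi,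
    ← lintegral_add_left_eq_self ((Ioi σ).indicator f) σ]
  congr 1
  funext ρ
  simp [indicator_apply]

theorem setLIntegral_Ioi_ofReal_mul_eq {f : ℝ → ENNReal} (hf : Measurable f) :
    ∫⁻ τ in Ioi 0, ENNReal.ofReal τ * f τ = ∫⁻ σ in Ioi 0, ∫⁻ ρ in Ioi 0, f (σ + ρ) := by
  set S : Set (ℝ × ℝ) := {p | 0 < p.1 ∧ p.1 < p.2}
  have hS : MeasurableSet S :=
    (measurableSet_lt measurable_const measurable_fst).inter
      (measurableSet_lt measurable_fst measurable_snd)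
  have hswap := lintegral_lintegral_swap (μ := volume) (ν := volume)
    (f := fun σ τ => S.indicator (fun p => f p.2) (σ, τ))
    ((hf.comp measurable_snd).indicator hS).aemeasurable
  have hσ (σ : ℝ) : ∫⁻ τ, S.indicator (fun p => f p.2) (σ, τ) =
      (Ioi 0).indicator (fun σ => ∫⁻ ρ in Ioi 0, f (σ + ρ)) σ := by
    rw [indicator_apply, setLIntegral_Ioi_add_eq, ← lintegral_indicator measurableSet_Ioi]
    split_ifs with h
    · congr 1; funext τ; simp [S, indicator_apply, mem_Ioi.1 h]
    · simp [S, show ¬ 0 < σ from h]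
  have hτ (τ : ℝ) : ∫⁻ σ, S.indicator (fun p => f p.2) (σ, τ) =
      (Ioi 0).indicator (fun τ => ENNReal.ofReal τ * f τ) τ := by
    have : (fun σ => S.indicator (fun p => f p.2) (σ, τ)) = (Ioo 0 τ).indicator fun _ => f τ := by
      funext σ; simp [S, indicator_apply]
    rw [this, lintegral_indicator_const measurableSet_Ioo, Real.volume_Ioo, sub_zero, mul_comm,
      indicator_apply]
    split_ifs with h
    · rfl
    · simp [ENNReal.ofReal_eq_zero.2 (not_lt.1 h)]
  simp only [hσ, hτ, lintegral_indicator measurableSet_Ioi] at hswap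
  exact hswap.symm

theorem mul_setLIntegral_Ioi_ofReal_mul_le_sq {f : ℝ → ENNReal} (hf : Measurable f) {c : ENNReal}
    (hmul : ∀ σ ρ, 0 < σ → 0 < ρ → c * f (σ + ρ) ≤ f σ * f ρ) :
    c * ∫⁻ τ in Ioi 0, ENNReal.ofReal τ * f τ ≤ (∫⁻ τ in Ioi 0, f τ) ^ 2 :=
  calc c * ∫⁻ τ in Ioi 0, ENNReal.ofReal τ * f τ
      = c * ∫⁻ σ in Ioi 0, ∫⁻ ρ in Ioi 0, f (σ + ρ) := by rw [setLIntegral_Ioi_ofReal_mul_eq hf]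
    _ ≤ ∫⁻ σ in Ioi 0, ∫⁻ ρ in Ioi 0, c * f (σ + ρ) :=
      (lintegral_const_mul_le _ _).trans (lintegral_mono fun σ => lintegral_const_mul_le _ _)
    _ ≤ ∫⁻ σ in Ioi 0, ∫⁻ ρ in Ioi 0, f σ * f ρ :=
      setLIntegral_mono' measurableSet_Ioi fun σ hσ =>
        setLIntegral_mono' measurableSet_Ioi fun ρ hρ => hmul σ ρ hσ hρ
    _ = (∫⁻ τ in Ioi 0, f τ) ^ 2 := by
      simp_rw [lintegral_const_mul _ hf, lintegral_mul_const _ hf, sq]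

theorem summable_one_div_add_pow {a : ℝ} (ha : 0 < a) {n : ℕ} (hn : 2 ≤ n) :
    Summable fun k : ℕ => 1 / (a + k) ^ n := by
  have := (summable_one_div_nat_add_rpow a n).2 (by exact_mod_cast hn)
  refine this.congr fun k => ?_
  rw [abs_of_pos (by positivity), rpow_natCast, add_comm]

theorem one_div_sub_one_div_le {ε p q : ℝ} (hε : 0 < ε) (hεp : ε ≤ p) (hpq : p ≤ q) :
    1 / p - 1 / q ≤ (q - p) * (1 / ε ^ 2) := by
  have hp : 0 < p := hε.trans_le hεp
  rw [div_sub_div _ _ hp.ne' (hp.trans_le hpq).ne', one_mul, mul_one, mul_one_div]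
  exact div_le_div_of_nonneg_left (by linarith) (by positivity) (by nlinarith)

theorem one_div_pow_sub_one_div_pow_nonneg {p q : ℝ} (hp : 0 < p) (hpq : p ≤ q) (n : ℕ) :
    0 ≤ 1 / p ^ n - 1 / q ^ n :=
  sub_nonneg.2 (one_div_le_one_div_of_le (by positivity) (pow_le_pow_left₀ hp.le hpq n))

/-- `ζ(n, a) - ζ(n, b)` for the Hurwitz zeta function; for `n = 1`, where the two series diverge,
it is `ψ(b) - ψ(a)` for the digamma function `ψ`. -/
noncomputable def hurwitzDiff (n : ℕ) (a b : ℝ) : ℝ := ∑' k : ℕ, (1 / (a + k) ^ n - 1 / (b + k) ^ n)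

theorem summable_hurwitzDiff {n : ℕ} (hn : n ≠ 0) {a b : ℝ} (ha : 0 < a) (hab : a ≤ b) :
    Summable fun k : ℕ => 1 / (a + k) ^ n - 1 / (b + k) ^ n := by
  have hb : 0 < b := ha.trans_le hab
  have hnonneg (k : ℕ) : 0 ≤ 1 / (a + k) ^ n - 1 / (b + k) ^ n :=
    one_div_pow_sub_one_div_pow_nonneg (by positivity) (by linarith) n
  obtain rfl | hn₁ := eq_or_ne n 1
  · refine ((summable_one_div_add_pow ha le_rfl).mul_left (b - a)).of_nonneg_of_le hnonneg
      fun k => ?_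
    simpa using one_div_sub_one_div_le (ε := a + k) (q := b + k) (by positivity) le_rfl
      (by linarith)
  · refine (summable_one_div_add_pow ha (n := n) (by omega)).of_nonneg_of_le hnonneg fun k => ?_
    exact sub_le_self _ (by positivity)

theorem integral_pow_mul_exp_neg_mul_Ioi (n : ℕ) {c : ℝ} (hc : 0 < c) :
    ∫ τ in Ioi 0, τ ^ n * exp (-(c * τ)) = n ! / c ^ (n + 1) := by
  have := integral_rpow_mul_exp_neg_mul_Ioi (by positivity : (0 : ℝ) < n + 1) hc
  rw [add_sub_cancel_right, Gamma_nat_eq_factorial, ← Nat.cast_add_one, rpow_natCast] at this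
  rw [div_eq_mul_inv, mul_comm, ← inv_pow, ← one_div, ← this]
  exact setIntegral_congr_fun measurableSet_Ioi fun τ _ => by rw [rpow_natCast]

theorem integrableOn_pow_mul_exp_neg_mul_Ioi (n : ℕ) {c : ℝ} (hc : 0 < c) :
    IntegrableOn (fun τ => τ ^ n * exp (-(c * τ))) (Ioi 0) :=
  .of_integral_ne_zero (by rw [integral_pow_mul_exp_neg_mul_Ioi n hc]; positivity)

theorem lintegral_pow_mul_exp_neg_mul_sub (n : ℕ) {p q : ℝ} (hp : 0 < p) (hpq : p ≤ q) :
    ∫⁻ τ in Ioi 0, ENNReal.ofReal (τ ^ n * (exp (-(p * τ)) - exp (-(q * τ)))) =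
      ENNReal.ofReal (n ! * (1 / p ^ (n + 1) - 1 / q ^ (n + 1))) := by
  have hp' := integrableOn_pow_mul_exp_neg_mul_Ioi n hp
  have hq' := integrableOn_pow_mul_exp_neg_mul_Ioi n (hp.trans_le hpq)
  have hint : IntegrableOn (fun τ => τ ^ n * (exp (-(p * τ)) - exp (-(q * τ)))) (Ioi 0) :=
    (hp'.sub hq').congr_fun (fun τ _ => (mul_sub _ _ _).symm) measurableSet_Ioi
  rw [← ofReal_integral_eq_lintegral_ofReal hint]
  · simp_rw [mul_sub]
    rw [integral_sub hp' hq', integral_pow_mul_exp_neg_mul_Ioi n hp,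
      integral_pow_mul_exp_neg_mul_Ioi n (hp.trans_le hpq)]
    ring_nf
  · filter_upwards [ae_restrict_mem measurableSet_Ioi] with τ (hτ : 0 < τ)
    have : exp (-(q * τ)) ≤ exp (-(p * τ)) := exp_le_exp.2 (by nlinarith)
    exact mul_nonneg (by positivity) (sub_nonneg.2 this)

noncomputable def hurwitzKernel (a b τ : ℝ) : ℝ :=
  (exp (-(a * τ)) - exp (-(b * τ))) / (1 - exp (-τ))

theorem hasSum_hurwitzKernel (a b : ℝ) {τ : ℝ} (hτ : 0 < τ) :
    HasSum (fun k : ℕ => exp (-((a + k) * τ)) - exp (-((b + k) * τ))) (hurwitzKernel a b τ) := by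
  have hgeom := (hasSum_geometric_of_lt_one (exp_pos (-τ)).le
    (exp_lt_one_iff.2 (by linarith))).mul_left (exp (-(a * τ)) - exp (-(b * τ)))
  have hterm : (fun k : ℕ => exp (-((a + k) * τ)) - exp (-((b + k) * τ))) =
      fun k => (exp (-(a * τ)) - exp (-(b * τ))) * exp (-τ) ^ k := by
    funext k
    rw [← exp_nat_mul, sub_mul, ← exp_add, ← exp_add]
    ring_nf
  rwa [hterm, hurwitzKernel, div_eq_mul_inv]

theorem lintegral_pow_mul_hurwitzKernel (n : ℕ) {a b : ℝ} (ha : 0 < a) (hab : a ≤ b) :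
    ∫⁻ τ in Ioi 0, ENNReal.ofReal (τ ^ n * hurwitzKernel a b τ) =
      ENNReal.ofReal (n ! * hurwitzDiff (n + 1) a b) := by
  have hterm (k : ℕ) : ∀ τ ∈ Ioi (0 : ℝ),
      0 ≤ τ ^ n * (exp (-((a + k) * τ)) - exp (-((b + k) * τ))) := fun τ (hτ : 0 < τ) =>
    mul_nonneg (by positivity) (sub_nonneg.2 (exp_le_exp.2 (by nlinarith)))
  calc ∫⁻ τ in Ioi 0, ENNReal.ofReal (τ ^ n * hurwitzKernel a b τ)
      = ∫⁻ τ in Ioi 0, ∑' k : ℕ,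
          ENNReal.ofReal (τ ^ n * (exp (-((a + k) * τ)) - exp (-((b + k) * τ)))) := by
        refine setLIntegral_congr_fun measurableSet_Ioi fun τ hτ => ?_
        have := (hasSum_hurwitzKernel a b hτ).mul_left (τ ^ n)
        rw [← this.tsum_eq, ENNReal.ofReal_tsum_of_nonneg (fun k => hterm k τ hτ) this.summable]
    _ = ∑' k : ℕ, ENNReal.ofReal (n ! * (1 / (a + k) ^ (n + 1) - 1 / (b + k) ^ (n + 1))) := by
        rw [lintegral_tsum fun k => by fun_prop]
        exact tsum_congr fun k =>
          lintegral_pow_mul_exp_neg_mul_sub n (by positivity) (by linarith)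
    _ = ENNReal.ofReal (n ! * hurwitzDiff (n + 1) a b) := by
        rw [hurwitzDiff, ← tsum_mul_left, ENNReal.ofReal_tsum_of_nonneg]
        · exact fun k => mul_nonneg (by positivity)
            (one_div_pow_sub_one_div_pow_nonneg (by positivity) (by linarith) _)
        · exact (summable_hurwitzDiff n.succ_ne_zero ha hab).mul_left _

theorem hurwitzKernel_eq (a b τ : ℝ) :
    hurwitzKernel a b τ = exp (-(a * τ)) * expRatio (b - a) τ := by
  rw [hurwitzKernel, expRatio, mul_div_assoc', mul_sub, mul_one, ← exp_add]
  ring_nf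

theorem mul_hurwitzKernel_add_le {a b σ ρ : ℝ} (hab : a < b) (hba : b ≤ a + 1) (hσ : 0 < σ)
    (hρ : 0 < ρ) :
    (b - a) * hurwitzKernel a b (σ + ρ) ≤ hurwitzKernel a b σ * hurwitzKernel a b ρ := by
  simp only [hurwitzKernel_eq]
  have := mul_expRatio_add_le (sub_pos.2 hab) (by linarith) hσ hρ
  have hexp : exp (-(a * (σ + ρ))) = exp (-(a * σ)) * exp (-(a * ρ)) := by
    rw [← exp_add]; ring_nf
  rw [hexp]
  calc (b - a) * (exp (-(a * σ)) * exp (-(a * ρ)) * expRatio (b - a) (σ + ρ))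
      = exp (-(a * σ)) * exp (-(a * ρ)) * ((b - a) * expRatio (b - a) (σ + ρ)) := by ring
    _ ≤ exp (-(a * σ)) * exp (-(a * ρ)) * (expRatio (b - a) σ * expRatio (b - a) ρ) := by gcongr
    _ = _ := by ring

theorem mul_hurwitzDiff_two_le_sq {a b : ℝ} (ha : 0 < a) (hab : a < b) (hba : b ≤ a + 1) :
    (b - a) * hurwitzDiff 2 a b ≤ hurwitzDiff 1 a b ^ 2 := by
  have hK (τ : ℝ) (hτ : 0 < τ) : 0 ≤ hurwitzKernel a b τ := by
    rw [hurwitzKernel_eq]; exact mul_nonneg (exp_pos _).le (expRatio_pos (by linarith) hτ).le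
  have hmeas : Measurable fun τ => ENNReal.ofReal (hurwitzKernel a b τ) := by
    unfold hurwitzKernel; fun_prop
  have key := mul_setLIntegral_Ioi_ofReal_mul_le_sq hmeas (c := ENNReal.ofReal (b - a))
    fun σ ρ hσ hρ => by
      rw [← ENNReal.ofReal_mul (by linarith), ← ENNReal.ofReal_mul (hK σ hσ)]
      exact ENNReal.ofReal_le_ofReal (mul_hurwitzKernel_add_le hab hba hσ hρ)
  have h₁ : ∫⁻ τ in Ioi 0, ENNReal.ofReal τ * ENNReal.ofReal (hurwitzKernel a b τ) =
      ENNReal.ofReal (hurwitzDiff 2 a b) := by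
    rw [← one_mul (hurwitzDiff 2 a b), ← Nat.cast_one, ← Nat.factorial_one,
      ← lintegral_pow_mul_hurwitzKernel 1 ha hab.le]
    refine setLIntegral_congr_fun measurableSet_Ioi fun τ (hτ : 0 < τ) => ?_
    rw [pow_one, ENNReal.ofReal_mul hτ.le]
  have h₀ : ∫⁻ τ in Ioi 0, ENNReal.ofReal (hurwitzKernel a b τ) =
      ENNReal.ofReal (hurwitzDiff 1 a b) := by
    simpa using lintegral_pow_mul_hurwitzKernel 0 ha hab.le
  have hpos : 0 ≤ hurwitzDiff 1 a b := tsum_nonneg fun k =>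
    one_div_pow_sub_one_div_pow_nonneg (by positivity) (by linarith) 1
  rw [h₁, h₀, ← ENNReal.ofReal_mul (by linarith), ← ENNReal.ofReal_pow hpos] at key
  exact (ENNReal.ofReal_le_ofReal_iff (by positivity)).1 key

theorem hasDerivAt_logGammaSeq {x : ℝ} (hx : 0 < x) (n : ℕ) :
    HasDerivAt (fun y => BohrMollerup.logGammaSeq y n)
      (log n - ∑ m ∈ Finset.range (n + 1), 1 / (x + m)) x := by
  have hsum : HasDerivAt (fun y => ∑ m ∈ Finset.range (n + 1), log (y + m))
      (∑ m ∈ Finset.range (n + 1), 1 / (x + m)) x :=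
    HasDerivAt.fun_sum fun m _ => by
      simpa using ((hasDerivAt_id x).add_const (m : ℝ)).log (by positivity)
  unfold BohrMollerup.logGammaSeq
  exact ((((hasDerivAt_id' x).mul_const (log n)).add_const (log n !)).sub hsum).congr_deriv
    (by simp)

theorem hasDerivAt_log_Gamma_sub {a b x : ℝ} (hab : a ≤ b) (hx : 0 < x + a) :
    HasDerivAt (fun y => log (Gamma (y + b)) - log (Gamma (y + a)))
      (hurwitzDiff 1 (x + a) (x + b)) x := by
  set ε := (x + a) / 2
  have hε : 0 < ε := by positivity
  have hU {y : ℝ} (hy : y ∈ Ioi (ε - a)) : ε < y + a := by linarith [mem_Ioi.1 hy]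
  have hbound (k : ℕ) (y : ℝ) (hy : y ∈ Ioi (ε - a)) :
      ‖1 / (y + a + k) ^ 1 - 1 / (y + b + k) ^ 1‖ ≤ (b - a) * (1 / (ε + k) ^ 2) := by
    have hyk : ε + k ≤ y + a + k := by linarith [hU hy]
    have hk : (0 : ℝ) ≤ k := k.cast_nonneg
    rw [Real.norm_of_nonneg (one_div_pow_sub_one_div_pow_nonneg (by linarith) (by linarith) 1),
      pow_one, pow_one]
    simpa using one_div_sub_one_div_le (by positivity) hyk (by linarith : y + a + k ≤ y + b + k)
  have hunif := tendstoUniformlyOn_tsum_nat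
    ((summable_one_div_add_pow hε le_rfl).mul_left (b - a)) hbound
  refine hasDerivAt_of_tendstoUniformlyOn isOpen_Ioi
    (fun u hu => (tendsto_add_atTop_nat 1).eventually (hunif u hu))
    (f := fun n y => BohrMollerup.logGammaSeq (y + b) n - BohrMollerup.logGammaSeq (y + a) n)
    (Eventually.of_forall fun n y hy => ?_) (fun y hy => ?_) (by simp [ε]; linarith)
  · have hya := hU hy
    have hda := (hasDerivAt_logGammaSeq (by linarith) n).comp_add_const y a
    have hdb := (hasDerivAt_logGammaSeq (by linarith) n).comp_add_const y b
    refine (hdb.sub hda).congr_deriv ?_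
    simp only [pow_one, Finset.sum_sub_distrib]
    ring
  · have hya := hU hy
    exact (BohrMollerup.tendsto_log_gamma (by linarith)).sub
      (BohrMollerup.tendsto_log_gamma (by linarith))

theorem hasDerivAt_hurwitzDiff_one {a b x : ℝ} (hab : a ≤ b) (hx : 0 < x + a) :
    HasDerivAt (fun y => hurwitzDiff 1 (y + a) (y + b)) (-hurwitzDiff 2 (x + a) (x + b)) x := by
  set ε := (x + a) / 2
  have hε : 0 < ε := by positivity
  have hU {y : ℝ} (hy : y ∈ Ioi (ε - a)) : ε < y + a := by linarith [mem_Ioi.1 hy]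
  have hderiv (k : ℕ) (y : ℝ) (hy : y ∈ Ioi (ε - a)) :
      HasDerivAt (fun y => 1 / (y + a + k) ^ 1 - 1 / (y + b + k) ^ 1)
        (-(1 / (y + a + k) ^ 2 - 1 / (y + b + k) ^ 2)) y := by
    have hk : (0 : ℝ) ≤ k := k.cast_nonneg
    have ha : y + a + k ≠ 0 := by linarith [hU hy]
    have hb : y + b + k ≠ 0 := by linarith [hU hy]
    simp only [pow_one]
    refine (((hasDerivAt_const y 1).div (((hasDerivAt_id' y).add_const a).add_const _) ha).sub
      ((hasDerivAt_const y 1).div (((hasDerivAt_id' y).add_const b).add_const _) hb)).congr_deriv ?_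
    ring
  have hbound (k : ℕ) (y : ℝ) (hy : y ∈ Ioi (ε - a)) :
      ‖-(1 / (y + a + k) ^ 2 - 1 / (y + b + k) ^ 2)‖ ≤ 1 / (ε + k) ^ 2 := by
    have hyk : ε + k ≤ y + a + k := by linarith [hU hy]
    have hk : (0 : ℝ) ≤ k := k.cast_nonneg
    rw [norm_neg, Real.norm_of_nonneg
      (one_div_pow_sub_one_div_pow_nonneg (by linarith) (by linarith) 2)]
    refine (sub_le_self _ (one_div_nonneg.2 (sq_nonneg _))).trans ?_
    exact one_div_le_one_div_of_le (by positivity) (pow_le_pow_left₀ (by positivity) hyk 2)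
  have := hasDerivAt_tsum_of_isPreconnected (summable_one_div_add_pow hε le_rfl) isOpen_Ioi
    isPreconnected_Ioi hderiv hbound (y₀ := x) (y := x) (by simp [ε]; linarith)
    (summable_hurwitzDiff one_ne_zero hx (by linarith)) (by simp [ε]; linarith)
  simpa only [hurwitzDiff, tsum_neg] using this

theorem z_eq_exp {s t x : ℝ} (hs : 0 < x + s) (ht : 0 < x + t) :
    z s t x = exp ((log (Gamma (x + t)) - log (Gamma (x + s))) / (t - s)) - x := by
  have hΓs := Gamma_pos_of_pos hs
  have hΓt := Gamma_pos_of_pos ht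
  rw [z, rpow_def_of_pos (div_pos hΓt hΓs), log_div hΓt.ne' hΓs.ne', mul_one_div]

theorem z_comm {s t x : ℝ} (hs : 0 < x + s) (ht : 0 < x + t) : z t s x = z s t x := by
  rw [z_eq_exp ht hs, z_eq_exp hs ht, ← neg_sub t s, div_neg, ← neg_div, neg_sub]

theorem convexOn_z_of_lt {s t : ℝ} (hs : 0 ≤ s) (hst : s < t) (hts : t ≤ s + 1) :
    ConvexOn ℝ (Ioi 0) (z s t) := by
  set E := fun y => exp ((log (Gamma (y + t)) - log (Gamma (y + s))) / (t - s))
  set h₁ := fun y => hurwitzDiff 1 (y + s) (y + t)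
  set h₂ := fun y => hurwitzDiff 2 (y + s) (y + t)
  have hE (y : ℝ) (hy : 0 < y) : HasDerivAt E (E y * (h₁ y / (t - s))) y :=
    ((hasDerivAt_log_Gamma_sub hst.le (by linarith)).div_const (t - s)).exp
  have hE' (y : ℝ) (hy : 0 < y) : HasDerivAt (fun y => E y * (h₁ y / (t - s)) - 1)
      (E y * (h₁ y ^ 2 - (t - s) * h₂ y) / (t - s) ^ 2) y := by
    refine (((hE y hy).mul ((hasDerivAt_hurwitzDiff_one hst.le
      (by linarith)).div_const (t - s))).sub_const 1).congr_deriv ?_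
    field_simp
    ring
  have hconv : ConvexOn ℝ (Ioi 0) fun y => E y - y := by
    refine convexOn_of_hasDerivWithinAt2_nonneg (convex_Ioi 0)
      (f' := fun y => E y * (h₁ y / (t - s)) - 1)
      (f'' := fun y => E y * (h₁ y ^ 2 - (t - s) * h₂ y) / (t - s) ^ 2)
      (fun y (hy : 0 < y) => ((hE y hy).sub (hasDerivAt_id y)).continuousAt.continuousWithinAt)
      (fun y hy => ?_) (fun y hy => ?_) (fun y hy => ?_) <;> rw [interior_Ioi] at hy
    · exact ((hE y hy).sub (hasDerivAt_id y)).hasDerivWithinAt.congr_deriv (by simp)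
    · exact (hE' y hy).hasDerivWithinAt
    · have key := mul_hurwitzDiff_two_le_sq (by linarith [mem_Ioi.1 hy])
        (by linarith : y + s < y + t) (by linarith)
      rw [show y + t - (y + s) = t - s by ring] at key
      exact div_nonneg (mul_nonneg (exp_pos _).le (sub_nonneg.2 key)) (sq_nonneg _)
  exact hconv.congr fun y (hy : 0 < y) => (z_eq_exp (by linarith) (by linarith)).symm

theorem z_convex (s t : ℝ) (hs : 0 ≤ s) (ht : 0 ≤ t)
    (h0 : 0 < |t - s|) (h1 : |t - s| < 1) :
    ConvexOn ℝ (Set.Ioi 0) (z s t) := by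
  rcases lt_or_gt_of_ne (sub_ne_zero.1 (abs_pos.1 h0)) with hts | hst
  · refine (convexOn_z_of_lt ht hts (by linarith [neg_abs_le (t - s)])).congr
      fun x (hx : 0 < x) => z_comm (by linarith) (by linarith)
  · exact convexOn_z_of_lt hs hst (by linarith [le_abs_self (t - s)])
end
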